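/- arXiv:1202.6461 — 4 statements merged into one kernel-verified Lean document; each statement's English description precedes it below -/
import Mathlib

section
/- Let D be an acyclic orientation of a graph G and let u be a source of D (a vertex with no ingoing arcs). Then the orientation D' obtained by reversing all arcs outgoing from u is again acyclic. -/
variable {V : Type*}

/-- An orientation of a simple graph `G`: each edge gets exactly one direction. -/
structure Orient (G : SimpleGraph V) where
  dir : V → V → Prop
  dir_adj : ∀ u v, dir u v → G.Adj u v
  adj_dir : ∀ u v, G.Adj u v → dir u v ∨ dir v u
  asymm : ∀ u v, dir u v → ¬ dir v u

/-- The relation obtained from `dir` by reversing the single arc `u → v`. -/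
def reverseArc (dir : V → V → Prop) (u v : V) : V → V → Prop :=
  fun a b => (dir a b ∧ ¬(a = u ∧ b = v)) ∨ (a = v ∧ b = u)

/-- A relation is acyclic if there is no directed cycle. -/
def IsAcyclicRel (dir : V → V → Prop) : Prop :=
  ∀ u v, dir u v → ¬ Relation.ReflTransGen dir v u

/-- An arc `u → v` is dependent if its reversal creates a directed cycle. -/
def DependentArc (dir : V → V → Prop) (u v : V) : Prop :=
  dir u v ∧ ¬ IsAcyclicRel (reverseArc dir u v)

/-- A cover graph admits an acyclic orientation with no dependent arcs. -/
def IsCoverGraph (G : SimpleGraph V) : Prop :=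
  ∃ D : Orient G, IsAcyclicRel D.dir ∧ ∀ u v, ¬ DependentArc D.dir u v

/-- The number of dependent arcs of an orientation. -/
noncomputable def numDependent {G : SimpleGraph V} (D : Orient G) : ℕ :=
  Set.ncard {p : V × V | DependentArc D.dir p.1 p.2}

/-- `d_min`: minimum number of dependent arcs over all acyclic orientations. -/
noncomputable def dmin (G : SimpleGraph V) : ℕ :=
  sInf {n | ∃ D : Orient G, IsAcyclicRel D.dir ∧ numDependent D = n}

/-- `d_max`: maximum number of dependent arcs over all acyclic orientations. -/
noncomputable def dmax (G : SimpleGraph V) : ℕ :=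
  sSup {n | ∃ D : Orient G, IsAcyclicRel D.dir ∧ numDependent D = n}

/-- `c(G)`: minimum number of edges to delete from `G` to get a cover graph. -/
noncomputable def coverDeletion (G : SimpleGraph V) : ℕ :=
  sInf {n | ∃ F : Set (Sym2 V), F ⊆ G.edgeSet ∧ IsCoverGraph (G.deleteEdges F) ∧ F.ncard = n}

/-- The generalized Mycielski graph `M_m(G)`; `none` is the apex `u`,
`some (i, a)` is the vertex `⟨i, a⟩`. -/
def genMycielski (G : SimpleGraph V) (m : ℕ) : SimpleGraph (Option (Fin (m + 1) × V)) where
  Adj x y :=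
    match x, y with
    | some (i, a), some (j, b) =>
        G.Adj a b ∧ ((i = j ∧ (i : ℕ) = 0) ∨ (i : ℕ) + 1 = (j : ℕ) ∨ (j : ℕ) + 1 = (i : ℕ))
    | some (i, _), none => (i : ℕ) = m
    | none, some (j, _) => (j : ℕ) = m
    | none, none => False
  symm := by
    constructor
    rintro (_ | ⟨i, a⟩) (_ | ⟨j, b⟩) h
    · exact h
    · exact h
    · exact h
    · refine ⟨h.1.symm, ?_⟩
      rcases h.2 with ⟨h1, h2⟩ | h' | h'
      · exact Or.inl ⟨h1.symm, h1 ▸ h2⟩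
      · exact Or.inr (Or.inr h')
      · exact Or.inr (Or.inl h')
  loopless := by
    constructor
    rintro (_ | ⟨i, a⟩) h <;> simp_all

/-- Source reversal at `u`: all arcs outgoing from `u` are reversed. -/
def srev (dir : V → V → Prop) (u : V) : V → V → Prop :=
  fun a b => (dir a b ∧ a ≠ u) ∨ (dir b a ∧ b = u)

/-- A source: a vertex with no ingoing arcs. -/
def IsSource (dir : V → V → Prop) (u : V) : Prop := ∀ v, ¬ dir v u

/-! After the reversal `u` is a sink, so a directed cycle cannot pass through `u`; away from `u`
the reversed relation agrees with the original one, which therefore already contains the cycle. -/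

section SourceReversal

variable {r : V → V → Prop} {u : V}

theorem IsAcyclicRel.irrefl (hr : IsAcyclicRel r) (a : V) : ¬ r a a :=
  fun h => hr a a h .refl

theorem IsSource.not_srev (hu : IsSource r u) (c : V) : ¬ srev r u u c := by
  rintro (⟨-, hne⟩ | ⟨h, -⟩)
  · exact hne rfl
  · exact hu c h

theorem IsSource.eq_of_reflTransGen_srev (hu : IsSource r u) {a : V}
    (h : Relation.ReflTransGen (srev r u) u a) : a = u := by
  rcases h.cases_head with rfl | ⟨c, hc, -⟩
  · rfl
  · exact absurd hc (hu.not_srev c)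

theorem reflTransGen_of_reflTransGen_srev {a b : V} (h : Relation.ReflTransGen (srev r u) a b)
    (hb : b ≠ u) : Relation.ReflTransGen r a b := by
  induction h with
  | refl => exact .refl
  | tail _ hcd ih =>
    rcases hcd with ⟨hcd, hc⟩ | ⟨-, rfl⟩
    · exact (ih hc).tail hcd
    · exact absurd rfl hb

theorem isAcyclicRel_srev (hr : IsAcyclicRel r) (hu : IsSource r u) :
    IsAcyclicRel (srev r u) := by
  rintro a b (⟨hab, ha⟩ | ⟨hba, rfl⟩) hcycle
  · exact hr a b hab (reflTransGen_of_reflTransGen_srev hcycle ha)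
  · exact hr.irrefl _ (hu.eq_of_reflTransGen_srev hcycle ▸ hba)

end SourceReversal

theorem srev_acyclic {G : SimpleGraph V} (D : Orient G)
    (hD : IsAcyclicRel D.dir) (u : V) (hu : IsSource D.dir u) :
    IsAcyclicRel (srev D.dir u) :=
  isAcyclicRel_srev hD hu
end

section
/- If d_min(G) = 2, then c(G) = 2. -/
variable {V : Type*}

/-!
Deleting the edges of the dependent arcs of an acyclic orientation leaves a cover graph, so
`c(G) ≤ d_min(G)`. Conversely, if `G - uv` has an acyclic orientation `D` without dependent arcs,
then `G` has an acyclic orientation in which only `u → v` can be dependent, so `c(G) ≤ 1` forces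
`d_min(G) ≤ 1`. If `D` has a path between `u` and `v`, orient `uv` along it. Otherwise reverse the
arcs of `D` leaving the set `S` of ancestors of `v`; since `S` is closed under predecessors this
creates no dependent arc, and afterwards no arc leaves `S`. Adding `u → v` can only make an arc
`a → b` with `a ⇝ u` and `v ⇝ b` dependent, and such an arc would come from an arc `b → a` of `D`
closing a path `v ⇝ b → a ⇝ u`, which does not exist.
-/

open Relation

def deleteArc (R : V → V → Prop) (a b : V) : V → V → Prop :=
  fun x y => R x y ∧ ¬(x = a ∧ y = b)

-- `reverseArc R a b` is definitionally `addArc (deleteArc R a b) b a`.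
def addArc (R : V → V → Prop) (a b : V) : V → V → Prop :=
  fun x y => R x y ∨ (x = a ∧ y = b)

section

variable {R : V → V → Prop} {a b u v p q x : V}

theorem reflTransGen_addArc (h : ReflTransGen (addArc R u v) p q) :
    ReflTransGen R p q ∨ (ReflTransGen R p u ∧ ReflTransGen R v q) := by
  induction h with
  | refl => exact Or.inl .refl
  | tail _ hstep ih =>
    rcases hstep with hstep | ⟨rfl, rfl⟩
    · exact ih.imp (·.tail hstep) fun ⟨hpu, hvq⟩ => ⟨hpu, hvq.tail hstep⟩
    · exact Or.inr ⟨ih.elim id (·.1), .refl⟩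

theorem reflTransGen_deleteArc_or (h : ReflTransGen R p q) :
    ReflTransGen (deleteArc R a b) p q ∨
      (ReflTransGen (deleteArc R a b) p a ∧ ReflTransGen (deleteArc R a b) b q) := by
  refine reflTransGen_addArc (ReflTransGen.mono (fun x y hxy => ?_) _ _ h)
  by_cases hab : x = a ∧ y = b
  exacts [Or.inr hab, Or.inl ⟨hxy, hab⟩]

theorem Relation.ReflTransGen.of_forall_mem {P Q : V → V → Prop} {S : Set V}
    (hPQ : ∀ x y, P x y → x ∈ S → y ∈ S ∧ Q x y) (h : ReflTransGen P p q) (hp : p ∈ S) :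
    ReflTransGen Q p q ∧ q ∈ S := by
  induction h with
  | refl => exact ⟨.refl, hp⟩
  | tail _ hstep ih =>
    obtain ⟨hQ, hS⟩ := ih
    obtain ⟨hS', hQ'⟩ := hPQ _ _ hstep hS
    exact ⟨hQ.tail hQ', hS'⟩

theorem Relation.ReflTransGen.of_forall_not_mem {P Q : V → V → Prop} {S : Set V}
    (hPQ : ∀ x y, P x y → y ∉ S → x ∉ S ∧ Q x y) (h : ReflTransGen P p q) (hq : q ∉ S) :
    ReflTransGen Q p q ∧ p ∉ S := by
  induction h using ReflTransGen.head_induction_on with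
  | refl => exact ⟨.refl, hq⟩
  | head hstep _ ih =>
    obtain ⟨hQ, hS⟩ := ih
    obtain ⟨hS', hQ'⟩ := hPQ _ _ hstep hS
    exact ⟨hQ.head hQ', hS'⟩

theorem Relation.ReflTransGen.exists_cross {P : V → V → Prop} {S : Set V} (h : ReflTransGen P p q)
    (hp : p ∉ S) (hq : q ∈ S) :
    ∃ x y, ReflTransGen P p x ∧ P x y ∧ x ∉ S ∧ y ∈ S ∧ ReflTransGen P y q := by
  induction h with
  | refl => exact absurd hq hp
  | @tail c d hpc hcd ih =>
    by_cases hc : c ∈ S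
    · obtain ⟨x, y, hpx, hxy, hx, hy, hyc⟩ := ih hc
      exact ⟨x, y, hpx, hxy, hx, hy, hyc.tail hcd⟩
    · exact ⟨c, d, hpc, hcd, hc, hq, .refl⟩

theorem dependentArc_of_reflTransGen_deleteArc (hab : R a b)
    (h : ReflTransGen (deleteArc R a b) a b) : DependentArc R a b :=
  ⟨hab, fun hac => hac b a (Or.inr ⟨rfl, rfl⟩) (ReflTransGen.mono (fun _ _ => Or.inl) _ _ h)⟩

theorem DependentArc.mono {S : V → V → Prop} (hRS : ∀ x y, R x y → S x y)
    (h : DependentArc R a b) : DependentArc S a b := by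
  refine ⟨hRS a b h.1, fun hac => h.2 fun x y hxy hyx => ?_⟩
  have hsub : ∀ x y, reverseArc R a b x y → reverseArc S a b x y :=
    fun x y => Or.imp_left fun ⟨hxy, hne⟩ => ⟨hRS x y hxy, hne⟩
  exact hac x y (hsub x y hxy) (ReflTransGen.mono hsub _ _ hyx)

namespace IsAcyclicRel

theorem mono {S : V → V → Prop} (hS : IsAcyclicRel S) (hRS : ∀ x y, R x y → S x y) :
    IsAcyclicRel R :=
  fun x y hxy hyx => hS x y (hRS x y hxy) (ReflTransGen.mono hRS _ _ hyx)

theorem eq_of_reflTransGen (hR : IsAcyclicRel R) {y : V} (hxy : ReflTransGen R x y)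
    (hyx : ReflTransGen R y x) : x = y := by
  rcases hxy.cases_head with rfl | ⟨z, hxz, hzy⟩
  · rfl
  · exact absurd (hzy.trans hyx) (hR x z hxz)

theorem addArc (hR : IsAcyclicRel R) (hvu : ¬ReflTransGen R v u) :
    IsAcyclicRel (_root_.addArc R u v) := by
  intro x y hxy hyx
  rcases hxy with hxy | ⟨rfl, rfl⟩ <;> rcases reflTransGen_addArc hyx with hyx | ⟨hyu, hvx⟩
  · exact hR x y hxy hyx
  · exact hvu ((hvx.tail hxy).trans hyu)
  · exact hvu hyx
  · exact hvu hyu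

theorem dependentArc_iff (hR : IsAcyclicRel R) :
    DependentArc R a b ↔ R a b ∧ ReflTransGen (deleteArc R a b) a b := by
  refine ⟨fun ⟨hab, hcyc⟩ => ⟨hab, ?_⟩, fun h => dependentArc_of_reflTransGen_deleteArc h.1 h.2⟩
  simp only [IsAcyclicRel, not_forall, not_not] at hcyc
  obtain ⟨x, y, hxy, hyx⟩ := hcyc
  rcases hxy with hxy | ⟨rfl, rfl⟩ <;> rcases reflTransGen_addArc hyx with hyx | ⟨hyb, hax⟩
  · exact absurd (ReflTransGen.mono (fun _ _ => And.left) _ _ hyx) (hR x y hxy.1)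
  · exact (hax.tail hxy).trans hyb
  · exact hyx
  · exact hyb

theorem eq_or_eq_of_reflTransGen (hR : IsAcyclicRel R) (hind : ∀ a b, ¬DependentArc R a b)
    (hab : R a b) (hax : ReflTransGen R a x) (hxb : ReflTransGen R x b) : x = a ∨ x = b := by
  by_contra! hne
  refine hind a b (dependentArc_of_reflTransGen_deleteArc hab ?_)
  have hax' : ReflTransGen (deleteArc R a b) a x := by
    refine (reflTransGen_deleteArc_or hax).resolve_right fun ⟨_, hbx⟩ => hne.2 ?_
    exact hR.eq_of_reflTransGen hxb (ReflTransGen.mono (fun _ _ => And.left) _ _ hbx)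
  have hxb' : ReflTransGen (deleteArc R a b) x b := by
    refine (reflTransGen_deleteArc_or hxb).resolve_right fun ⟨hxa, _⟩ => hne.1 ?_
    exact hR.eq_of_reflTransGen (ReflTransGen.mono (fun _ _ => And.left) _ _ hxa) hax
  exact hax'.trans hxb'

theorem eq_and_eq_of_reflTransGen (hR : IsAcyclicRel R) (hind : ∀ a b, ¬DependentArc R a b)
    (hab : R a b) (hau : ReflTransGen R a u) (huv : ReflTransGen R u v)
    (hvb : ReflTransGen R v b) (hne : u ≠ v) : a = u ∧ b = v := by
  rcases hR.eq_or_eq_of_reflTransGen hind hab hau (huv.trans hvb) with rfl | rfl <;>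
    rcases hR.eq_or_eq_of_reflTransGen hind hab (hau.trans huv) hvb with rfl | rfl
  · exact absurd rfl hne
  · exact ⟨rfl, rfl⟩
  · exact absurd huv (hR _ _ hab)
  · exact absurd rfl hne

theorem dependentArc_addArc (hR : IsAcyclicRel R) (hvu : ¬ReflTransGen R v u)
    (h : DependentArc (_root_.addArc R u v) a b) :
    (a = u ∧ b = v) ∨ DependentArc R a b ∨
      (R a b ∧ ReflTransGen R a u ∧ ReflTransGen R v b) := by
  obtain ⟨hab | huv, hpath⟩ := (hR.addArc hvu).dependentArc_iff.1 h
  · refine Or.inr ?_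
    have hsub : ∀ x y, deleteArc (_root_.addArc R u v) a b x y →
        _root_.addArc (deleteArc R a b) u v x y :=
      fun x y ⟨hxy, hne⟩ => hxy.imp_left fun hxy => ⟨hxy, hne⟩
    rcases reflTransGen_addArc (ReflTransGen.mono hsub _ _ hpath) with hpath | ⟨hau, hvb⟩
    · exact Or.inl (dependentArc_of_reflTransGen_deleteArc hab hpath)
    · exact Or.inr ⟨hab, ReflTransGen.mono (fun _ _ => And.left) _ _ hau,
      ReflTransGen.mono (fun _ _ => And.left) _ _ hvb⟩
  · exact Or.inl huv

end IsAcyclicRel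

end

namespace Orient

variable {G H : SimpleGraph V} {u v x y : V}

def addEdge (D : Orient H) (hH : H = G.deleteEdges {s(u, v)}) (huv : G.Adj u v) : Orient G where
  dir := addArc D.dir u v
  dir_adj := by
    subst hH
    rintro x y (h | ⟨rfl, rfl⟩)
    exacts [(SimpleGraph.deleteEdges_adj.1 (D.dir_adj x y h)).1, huv]
  adj_dir x y hxy := by
    subst hH
    by_cases he : s(x, y) = s(u, v)
    · rcases Sym2.eq_iff.1 he with ⟨rfl, rfl⟩ | ⟨rfl, rfl⟩
      exacts [Or.inl (Or.inr ⟨rfl, rfl⟩), Or.inr (Or.inr ⟨rfl, rfl⟩)]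
    · exact (D.adj_dir x y (SimpleGraph.deleteEdges_adj.2 ⟨hxy, he⟩)).imp Or.inl Or.inl
  asymm := by
    subst hH
    have hD : ∀ x y, D.dir x y → s(x, y) ≠ s(u, v) := fun x y h =>
      (SimpleGraph.deleteEdges_adj.1 (D.dir_adj x y h)).2
    rintro x y (h | ⟨rfl, rfl⟩) (h' | ⟨hyu, hxv⟩)
    · exact D.asymm x y h h'
    · subst hyu hxv
      exact hD _ _ h Sym2.eq_swap
    · exact hD _ _ h' Sym2.eq_swap
    · exact huv.ne hxv

theorem numDependent_le_one (D : Orient G) (h : ∀ a b, DependentArc D.dir a b → a = u ∧ b = v) :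
    numDependent D ≤ 1 := by
  refine (Set.ncard_le_ncard (t := {(u, v)}) ?_ (Set.finite_singleton _)).trans_eq
    (Set.ncard_singleton _)
  rintro ⟨a, b⟩ hab
  obtain ⟨rfl, rfl⟩ := h a b hab
  rfl

theorem exists_numDependent_le_one (D : Orient H) (hH : H = G.deleteEdges {s(u, v)})
    (huv : G.Adj u v) (hD : IsAcyclicRel D.dir) (hind : ∀ a b, ¬DependentArc D.dir a b)
    (hvu : ¬ReflTransGen D.dir v u)
    (hspan : ∀ a b, D.dir a b → ReflTransGen D.dir a u → ReflTransGen D.dir v b → False) :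
    ∃ D' : Orient G, IsAcyclicRel D'.dir ∧ numDependent D' ≤ 1 := by
  refine ⟨D.addEdge hH huv, hD.addArc hvu,
    numDependent_le_one (u := u) (v := v) _ fun a b hab => ?_⟩
  rcases hD.dependentArc_addArc hvu hab with huv | hab | ⟨hab, hau, hvb⟩
  exacts [huv, absurd hab (hind a b), (hspan a b hab hau hvb).elim]

def reverseLeaving (D : Orient G) (S : Set V) : Orient G where
  dir x y := (D.dir x y ∧ (x ∈ S → y ∈ S)) ∨ (D.dir y x ∧ y ∈ S ∧ x ∉ S)
  dir_adj x y := by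
    rintro (⟨h, -⟩ | ⟨h, -⟩)
    exacts [D.dir_adj x y h, (D.dir_adj y x h).symm]
  adj_dir x y hxy := by
    have := D.asymm x y
    rcases D.adj_dir x y hxy with h | h <;> by_cases hx : x ∈ S <;> by_cases hy : y ∈ S <;>
      simp [h, hx, hy]
  asymm x y := by
    have := D.asymm x y
    have := D.asymm y x
    tauto

section reverseLeaving

variable {D : Orient G} {S : Set V}

theorem reverseLeaving_of_mem (h : (D.reverseLeaving S).dir x y) (hx : x ∈ S) :
    y ∈ S ∧ D.dir x y := by
  rcases h with ⟨h, hS⟩ | ⟨-, -, hx'⟩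
  exacts [⟨hS hx, h⟩, absurd hx hx']

theorem reverseLeaving_of_not_mem (h : (D.reverseLeaving S).dir x y) (hy : y ∉ S) :
    x ∉ S ∧ D.dir x y := by
  rcases h with ⟨h, hS⟩ | ⟨-, hy', -⟩
  exacts [⟨mt hS hy, h⟩, absurd hy' hy]

theorem reverseLeaving_of_not_mem_of_mem (hS : ∀ x y, D.dir x y → y ∈ S → x ∈ S)
    (h : (D.reverseLeaving S).dir x y) (hx : x ∉ S) (hy : y ∈ S) : D.dir y x := by
  rcases h with ⟨h, -⟩ | ⟨h, -⟩
  exacts [absurd (hS x y h hy) hx, h]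

theorem reverseLeaving_isAcyclicRel (hD : IsAcyclicRel D.dir) :
    IsAcyclicRel (D.reverseLeaving S).dir := by
  intro x y hxy hyx
  by_cases hx : x ∈ S
  · obtain ⟨hy, hxy⟩ := reverseLeaving_of_mem hxy hx
    exact hD x y hxy (hyx.of_forall_mem (fun _ _ => reverseLeaving_of_mem) hy).1
  · have hy : y ∉ S := fun hy => hx (hyx.of_forall_mem (fun _ _ => reverseLeaving_of_mem) hy).2
    exact hD x y (reverseLeaving_of_not_mem hxy hy).2
      (hyx.of_forall_not_mem (fun _ _ => reverseLeaving_of_not_mem) hx).1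

theorem reverseLeaving_not_dependentArc (hD : IsAcyclicRel D.dir)
    (hind : ∀ a b, ¬DependentArc D.dir a b) (hS : ∀ x y, D.dir x y → y ∈ S → x ∈ S)
    (a b : V) : ¬DependentArc (D.reverseLeaving S).dir a b := by
  intro hdep
  obtain ⟨hab, hpath⟩ := (reverseLeaving_isAcyclicRel hD).dependentArc_iff.1 hdep
  by_cases ha : a ∈ S
  · refine hind a b (dependentArc_of_reflTransGen_deleteArc (reverseLeaving_of_mem hab ha).2 ?_)
    refine (hpath.of_forall_mem (fun x y hxy hx => ?_) ha).1
    exact (reverseLeaving_of_mem hxy.1 hx).imp_right fun h => ⟨h, hxy.2⟩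
  by_cases hb : b ∈ S
  · obtain ⟨x, y, hax, hxy, hx, hy, hyb⟩ := hpath.exists_cross ha hb
    have hax : ReflTransGen D.dir a x := (ReflTransGen.of_forall_not_mem
      (fun _ _ h => reverseLeaving_of_not_mem h.1) hax hx).1
    have hyb : ReflTransGen D.dir y b := (ReflTransGen.of_forall_mem
      (fun _ _ h => reverseLeaving_of_mem h.1) hyb hy).1
    have hba := reverseLeaving_of_not_mem_of_mem hS hab ha hb
    have hyx := reverseLeaving_of_not_mem_of_mem hS hxy.1 hx hy
    -- the arc `y → x` of `D` spans the path `y ⇝ b → a ⇝ x`, so it must be the arc `b → a`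
    have hby : b = y := (hD.eq_or_eq_of_reflTransGen hind hyx hyb (.head hba hax)).resolve_right
      fun h => hx (h ▸ hb)
    have hax : a = x := (hD.eq_or_eq_of_reflTransGen hind hyx (hyb.tail hba) hax).resolve_left
      fun h => ha (h ▸ hy)
    exact hxy.2 ⟨hax.symm, hby.symm⟩
  · refine hind a b (dependentArc_of_reflTransGen_deleteArc (reverseLeaving_of_not_mem hab hb).2 ?_)
    refine (hpath.of_forall_not_mem (fun x y hxy hy => ?_) hb).1
    exact (reverseLeaving_of_not_mem hxy.1 hy).imp_right fun h => ⟨h, hxy.2⟩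

end reverseLeaving

end Orient

theorem dmin_le_numDependent {G : SimpleGraph V} (D : Orient G) (hD : IsAcyclicRel D.dir) :
    dmin G ≤ numDependent D :=
  Nat.sInf_le ⟨D, hD, rfl⟩

theorem dmin_le_one_of_isCoverGraph_deleteEdges {G : SimpleGraph V} {u v : V} (huv : G.Adj u v)
    (hc : IsCoverGraph (G.deleteEdges {s(u, v)})) : dmin G ≤ 1 := by
  obtain ⟨D, hD, hind⟩ := hc
  suffices ∃ D' : Orient G, IsAcyclicRel D'.dir ∧ numDependent D' ≤ 1 by
    obtain ⟨D', hD', hle⟩ := this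
    exact (dmin_le_numDependent D' hD').trans hle
  have hD_ne : ∀ {x y}, s(x, y) = s(u, v) → ¬D.dir x y := fun he h =>
    (SimpleGraph.deleteEdges_adj.1 (D.dir_adj _ _ h)).2 he
  by_cases huv' : ReflTransGen D.dir u v
  · refine D.exists_numDependent_le_one rfl huv hD hind
      (fun hvu => huv.ne (hD.eq_of_reflTransGen huv' hvu)) fun a b hab hau hvb => ?_
    obtain ⟨rfl, rfl⟩ := hD.eq_and_eq_of_reflTransGen hind hab hau huv' hvb huv.ne
    exact hD_ne rfl hab
  by_cases hvu : ReflTransGen D.dir v u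
  · refine D.exists_numDependent_le_one (by rw [Sym2.eq_swap]) huv.symm hD hind huv'
      fun a b hab hav hub => ?_
    obtain ⟨rfl, rfl⟩ := hD.eq_and_eq_of_reflTransGen hind hab hav hvu hub huv.ne'
    exact hD_ne Sym2.eq_swap hab
  set S : Set V := {x | ReflTransGen D.dir x v}
  have hS : ∀ x y, D.dir x y → y ∈ S → x ∈ S := fun _ _ hxy hy => ReflTransGen.head hxy hy
  have hfwd : ∀ x y, (D.reverseLeaving S).dir x y → x ∈ S → y ∈ S ∧ D.dir x y :=
    fun _ _ => Orient.reverseLeaving_of_mem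
  have hbwd : ∀ x y, (D.reverseLeaving S).dir x y → y ∉ S → x ∉ S ∧ D.dir x y :=
    fun _ _ => Orient.reverseLeaving_of_not_mem
  refine (D.reverseLeaving S).exists_numDependent_le_one rfl huv
    (Orient.reverseLeaving_isAcyclicRel hD) (Orient.reverseLeaving_not_dependentArc hD hind hS)
    (fun hvu' => huv' (hvu'.of_forall_mem hfwd (ReflTransGen.refl : v ∈ S)).2)
    fun a b hab hau hvb => hvu ?_
  obtain ⟨hau, ha⟩ := hau.of_forall_not_mem hbwd huv'
  obtain ⟨hvb, hb⟩ := hvb.of_forall_mem hfwd (ReflTransGen.refl : v ∈ S)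
  exact hvb.trans (.head (Orient.reverseLeaving_of_not_mem_of_mem hS hab ha hb) hau)

def Orient.deleteEdges {G : SimpleGraph V} (D : Orient G) (F : Set (Sym2 V)) :
    Orient (G.deleteEdges F) where
  dir x y := D.dir x y ∧ s(x, y) ∉ F
  dir_adj x y h := SimpleGraph.deleteEdges_adj.2 ⟨D.dir_adj x y h.1, h.2⟩
  adj_dir x y h := by
    rw [SimpleGraph.deleteEdges_adj] at h
    rcases D.adj_dir x y h.1 with hxy | hyx
    exacts [Or.inl ⟨hxy, h.2⟩, Or.inr ⟨hyx, Sym2.eq_swap ▸ h.2⟩]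
  asymm x y h h' := D.asymm x y h.1 h'.1

theorem coverDeletion_le_ncard {G : SimpleGraph V} {F : Set (Sym2 V)} (hFG : F ⊆ G.edgeSet)
    (hF : IsCoverGraph (G.deleteEdges F)) : coverDeletion G ≤ F.ncard :=
  Nat.sInf_le ⟨F, hFG, hF, rfl⟩

theorem coverDeletion_le_numDependent [Finite V] {G : SimpleGraph V} (D : Orient G)
    (hD : IsAcyclicRel D.dir) : coverDeletion G ≤ numDependent D := by
  set F := (fun p : V × V => s(p.1, p.2)) '' {p | DependentArc D.dir p.1 p.2}
  have hFG : F ⊆ G.edgeSet := by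
    rintro _ ⟨⟨a, b⟩, hab, rfl⟩
    exact D.dir_adj a b hab.1
  have hcover : IsCoverGraph (G.deleteEdges F) := by
    refine ⟨D.deleteEdges F, hD.mono fun _ _ => And.left, fun a b hab => ?_⟩
    exact hab.1.2 ⟨(a, b), hab.mono (fun _ _ => And.left), rfl⟩
  exact (coverDeletion_le_ncard hFG hcover).trans (Set.ncard_image_le (Set.toFinite _))

theorem isCoverGraph_bot : IsCoverGraph (⊥ : SimpleGraph V) :=
  ⟨⟨fun _ _ => False, fun _ _ => False.elim, fun _ _ => False.elim, fun _ _ => False.elim⟩,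
    fun _ _ => False.elim, fun _ _ h => h.1⟩

theorem dmin_le_one_of_coverDeletion_le_one [Finite V] {G : SimpleGraph V}
    (h : coverDeletion G ≤ 1) : dmin G ≤ 1 := by
  obtain ⟨F, hFG, hcover, hF⟩ := Nat.sInf_mem (s := {n | ∃ F : Set (Sym2 V), F ⊆ G.edgeSet ∧
      IsCoverGraph (G.deleteEdges F) ∧ F.ncard = n})
    ⟨_, G.edgeSet, subset_rfl, by simpa using isCoverGraph_bot, rfl⟩
  rcases (Set.ncard_le_one_iff_eq (Set.toFinite F)).1 (hF.trans_le h) with rfl | ⟨e, rfl⟩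
  · obtain ⟨D, hD, hind⟩ := SimpleGraph.deleteEdges_empty (G := G) ▸ hcover
    refine (dmin_le_numDependent D hD).trans ?_
    simp [numDependent, hind]
  · induction e using Sym2.ind with
    | _ u v => exact dmin_le_one_of_isCoverGraph_deleteEdges (hFG rfl) hcover

theorem coverDeletion_eq_two [Finite V] (G : SimpleGraph V)
    (h : dmin G = 2) : coverDeletion G = 2 := by
  obtain ⟨D, hD, hD₂⟩ : ∃ D : Orient G, IsAcyclicRel D.dir ∧ numDependent D = 2 :=
    h ▸ Nat.sInf_mem (Nat.nonempty_of_pos_sInf (h ▸ two_pos : 0 < dmin G))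
  refine le_antisymm (hD₂ ▸ coverDeletion_le_numDependent D hD) ?_
  by_contra! hlt
  have := dmin_le_one_of_coverDeletion_le_one (G := G) (by omega)
  omega
end

section
/- Let G be a graph on vertices ⟨0,0⟩,…,⟨0,n−1⟩ and let S be an independent set of vertices of G. Then the subgraph of the Mycielskian M(G) induced on (V(G) ∖ S) ∪ S′, where S′ = {⟨1,j⟩ : ⟨0,j⟩ ∈ S}, is isomorphic to G. -/
variable {V : Type*}

/- Send `v` to its copy `⟨1, v⟩` when `v ∈ S` and to `⟨0, v⟩` otherwise. In `M(G)` the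
images of the ends of an edge `ab` of `G` are adjacent unless both lie in layer `1`, which
would force `a, b ∈ S`; so for independent `S` the map is a graph embedding, and its range is
the given vertex set. -/

namespace SimpleGraph

variable {G : SimpleGraph V}

theorem genMycielski_one_adj_some {i j : Fin 2} {a b : V} :
    (genMycielski G 1).Adj (some (i, a)) (some (j, b)) ↔ G.Adj a b ∧ ¬(i = 1 ∧ j = 1) := by
  simp only [genMycielski]
  fin_cases i <;> fin_cases j <;> simp

def toMycielski (S : Set V) [DecidablePred (· ∈ S)] (v : V) : Option (Fin 2 × V) :=
  some (if v ∈ S then 1 else 0, v)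

theorem toMycielski_injective (S : Set V) [DecidablePred (· ∈ S)] :
    Function.Injective (toMycielski S) :=
  fun _ _ h ↦ (Prod.ext_iff.mp (Option.some.inj h)).2

theorem genMycielski_one_adj_toMycielski (S : Set V) [DecidablePred (· ∈ S)] {a b : V} :
    (genMycielski G 1).Adj (toMycielski S a) (toMycielski S b) ↔
      G.Adj a b ∧ ¬(a ∈ S ∧ b ∈ S) := by
  rw [toMycielski, toMycielski, genMycielski_one_adj_some]
  by_cases ha : a ∈ S <;> by_cases hb : b ∈ S <;> simp [ha, hb]

theorem range_toMycielski (S : Set V) [DecidablePred (· ∈ S)] :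
    Set.range (toMycielski S) = {x : Option (Fin 2 × V) | (∃ j, j ∉ S ∧ x = some (0, j)) ∨
      (∃ j, j ∈ S ∧ x = some (1, j))} := by
  ext x
  constructor
  · rintro ⟨v, rfl⟩
    by_cases hv : v ∈ S <;> simp [toMycielski, hv]
  · rintro (⟨v, hv, rfl⟩ | ⟨v, hv, rfl⟩) <;> exact ⟨v, by simp [toMycielski, hv]⟩

def Embedding.toMycielski (S : Set V) [DecidablePred (· ∈ S)]
    (hS : ∀ a ∈ S, ∀ b ∈ S, ¬ G.Adj a b) : G ↪g genMycielski G 1 where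
  toFun := SimpleGraph.toMycielski S
  inj' := toMycielski_injective S
  map_rel_iff' {a b} := (genMycielski_one_adj_toMycielski S).trans
    ⟨And.left, fun h ↦ ⟨h, fun ⟨ha, hb⟩ ↦ hS a ha b hb h⟩⟩

end SimpleGraph

open SimpleGraph in
theorem induced_isomorphic_of_independent (G : SimpleGraph V) (S : Set V)
    (hS : ∀ a ∈ S, ∀ b ∈ S, ¬ G.Adj a b) :
    Nonempty (G ≃g ((genMycielski G 1).induce
      {x : Option (Fin 2 × V) | (∃ j, j ∉ S ∧ x = some (0, j)) ∨
        (∃ j, j ∈ S ∧ x = some (1, j))})) := by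
  classical
  rw [← range_toMycielski S]
  exact ⟨(Embedding.toMycielski S hS).isoInduceRange⟩
end

section
/- Let G be a triangle-free graph with at least two edges. For any two edges e₁, e₂ of M(G) − u, the graph M(G) − u − {e₁, e₂} contains a subgraph isomorphic to G. -/
/-!
Lifting the vertices of an independent set `S` of `G` from level `0` to level `1` embeds `G`
into `M(G) - u`: an edge `xy` lands on `⟨0,x⟩⟨0,y⟩` if `x, y ∉ S` and on `⟨0,x⟩⟨1,y⟩` if `y ∈ S`.
So the lifted copy avoids a level-0 edge `⟨0,a⟩⟨0,b⟩` as soon as `S` meets `{a, b}`, and a cross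
edge `⟨0,c⟩⟨1,d⟩` as soon as `c ∈ S` or `d ∉ S`. Such an `S` always exists; for two level-0 edges
take `{a, c}` or, if `a ~ c`, `{a, d}`, which is independent because `G` is triangle-free.
-/

variable {V : Type*}

/-- The Mycielskian `M(G)` with the apex vertex `u` deleted. -/
def MyDelU (G : SimpleGraph V) : SimpleGraph {x : Option (Fin 2 × V) // x ≠ none} :=
  SimpleGraph.comap Subtype.val (genMycielski G 1)

/-- The copy of a vertex of `G` at level `0` inside `M(G) - u`. -/
def lvl0 (a : V) : {x : Option (Fin 2 × V) // x ≠ none} :=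
  ⟨some (0, a), Option.some_ne_none _⟩

def lvl1 (a : V) : {x : Option (Fin 2 × V) // x ≠ none} :=
  ⟨some (1, a), Option.some_ne_none _⟩

lemma lvl0_injective : Function.Injective (lvl0 : V → _) := by
  intro a b h
  simpa [lvl0] using h

lemma lvl1_injective : Function.Injective (lvl1 : V → _) := by
  intro a b h
  simpa [lvl1] using h

lemma lvl0_ne_lvl1 (a b : V) : lvl0 a ≠ lvl1 b := by
  simp [lvl0, lvl1, Subtype.ext_iff]

section

variable {G : SimpleGraph V}

lemma myDelU_adj_lvl0_lvl0 {a b : V} : (MyDelU G).Adj (lvl0 a) (lvl0 b) ↔ G.Adj a b := by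
  simp [MyDelU, genMycielski, lvl0]

lemma myDelU_adj_lvl0_lvl1 {a b : V} : (MyDelU G).Adj (lvl0 a) (lvl1 b) ↔ G.Adj a b := by
  simp [MyDelU, genMycielski, lvl0, lvl1]

lemma exists_adj_of_mem_edgeSet_myDelU {e : Sym2 {x : Option (Fin 2 × V) // x ≠ none}}
    (he : e ∈ (MyDelU G).edgeSet) :
    ∃ a b, G.Adj a b ∧ (e = s(lvl0 a, lvl0 b) ∨ e = s(lvl0 a, lvl1 b)) := by
  induction e using Sym2.ind with
  | _ x y =>
    obtain ⟨(_ | ⟨i, a⟩), hx⟩ := x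
    · exact absurd rfl hx
    obtain ⟨(_ | ⟨j, b⟩), hy⟩ := y
    · exact absurd rfl hy
    obtain ⟨hab, hlevels⟩ := he
    fin_cases i <;> fin_cases j
    · exact ⟨a, b, hab, Or.inl rfl⟩
    · exact ⟨a, b, hab, Or.inr rfl⟩
    · exact ⟨b, a, hab.symm, Or.inr Sym2.eq_swap⟩
    · simp at hlevels

open Classical in
noncomputable def raiseLevel (S : Set V) (a : V) : {x : Option (Fin 2 × V) // x ≠ none} :=
  if a ∈ S then lvl1 a else lvl0 a

lemma raiseLevel_eq_lvl0_iff {S : Set V} {x a : V} :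
    raiseLevel S x = lvl0 a ↔ x = a ∧ a ∉ S := by
  unfold raiseLevel
  split_ifs with hx
  · simpa [(lvl0_ne_lvl1 a x).symm] using fun h => h ▸ hx
  · simpa [lvl0_injective.eq_iff] using fun h => h ▸ hx

lemma raiseLevel_eq_lvl1_iff {S : Set V} {x a : V} :
    raiseLevel S x = lvl1 a ↔ x = a ∧ a ∈ S := by
  unfold raiseLevel
  split_ifs with hx
  · simpa [lvl1_injective.eq_iff] using fun h => h ▸ hx
  · simpa [lvl0_ne_lvl1 x a] using fun h => h ▸ hx

lemma raiseLevel_injective (S : Set V) : Function.Injective (raiseLevel S) := by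
  classical
  intro x y h
  by_cases hy : y ∈ S
  · rw [show raiseLevel S y = lvl1 y from if_pos hy, raiseLevel_eq_lvl1_iff] at h
    exact h.1
  · rw [show raiseLevel S y = lvl0 y from if_neg hy, raiseLevel_eq_lvl0_iff] at h
    exact h.1

lemma map_raiseLevel_ne_lvl0_lvl0 {S : Set V} {a b : V} (h : a ∈ S ∨ b ∈ S) (e : Sym2 V) :
    e.map (raiseLevel S) ≠ s(lvl0 a, lvl0 b) := by
  induction e using Sym2.ind with
  | _ x y =>
    simp only [Sym2.map_mk, ne_eq, Sym2.eq_iff, raiseLevel_eq_lvl0_iff]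
    tauto

lemma map_raiseLevel_ne_lvl0_lvl1 {S : Set V} {c d : V} (h : c ∈ S ∨ d ∉ S) (e : Sym2 V) :
    e.map (raiseLevel S) ≠ s(lvl0 c, lvl1 d) := by
  induction e using Sym2.ind with
  | _ x y =>
    simp only [Sym2.map_mk, ne_eq, Sym2.eq_iff, raiseLevel_eq_lvl0_iff, raiseLevel_eq_lvl1_iff]
    tauto

noncomputable def raiseLevelHom {S : Set V} (hS : G.IsIndepSet S) : G →g MyDelU G where
  toFun := raiseLevel S
  map_rel' {x y} hxy := by
    unfold raiseLevel
    split_ifs with hx hy hy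
    · exact absurd hxy (hS hx hy hxy.ne)
    · exact (myDelU_adj_lvl0_lvl1.mpr hxy.symm).symm
    · exact myDelU_adj_lvl0_lvl1.mpr hxy
    · exact myDelU_adj_lvl0_lvl0.mpr hxy

lemma exists_injective_hom_deleteEdges_myDelU {S : Set V} (hS : G.IsIndepSet S)
    {e₁ e₂ : Sym2 {x : Option (Fin 2 × V) // x ≠ none}}
    (h₁ : ∀ e ∈ G.edgeSet, e.map (raiseLevel S) ≠ e₁)
    (h₂ : ∀ e ∈ G.edgeSet, e.map (raiseLevel S) ≠ e₂) :
    ∃ f : G →g (MyDelU G).deleteEdges {e₁, e₂}, Function.Injective f := by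
  refine ⟨⟨raiseLevel S, fun {x y} hxy => ?_⟩, raiseLevel_injective S⟩
  rw [SimpleGraph.deleteEdges_adj, Set.mem_insert_iff, Set.mem_singleton_iff]
  exact ⟨(raiseLevelHom hS).map_rel hxy, fun h => h.elim (h₁ s(x, y) hxy) (h₂ s(x, y) hxy)⟩

lemma isIndepSet_pair_of_not_adj {p q : V} (h : ¬G.Adj p q) : G.IsIndepSet {p, q} :=
  Set.pairwise_pair.mpr fun _ => ⟨h, fun h' => h h'.symm⟩

lemma exists_isIndepSet_meets_pair_avoids {a b : V} (hab : a ≠ b) (c d : V) :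
    ∃ S : Set V, G.IsIndepSet S ∧ (a ∈ S ∨ b ∈ S) ∧ (c ∈ S ∨ d ∉ S) := by
  by_cases hda : d = a
  · subst hda
    exact ⟨{b}, Set.pairwise_singleton _ _, Or.inr rfl, Or.inr hab⟩
  · exact ⟨{a}, Set.pairwise_singleton _ _, Or.inl rfl, Or.inr hda⟩

lemma exists_isIndepSet_mem_meets (htf : G.CliqueFree 3) (a : V) {c d : V} (hcd : G.Adj c d) :
    ∃ S : Set V, G.IsIndepSet S ∧ a ∈ S ∧ (c ∈ S ∨ d ∈ S) := by
  classical
  by_cases hac : G.Adj a c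
  · have had : ¬G.Adj a d := fun had =>
      htf _ (SimpleGraph.is3Clique_triple_iff.mpr ⟨hac, had, hcd⟩)
    exact ⟨{a, d}, isIndepSet_pair_of_not_adj had, .inl rfl, .inr (.inr rfl)⟩
  · exact ⟨{a, c}, isIndepSet_pair_of_not_adj hac, .inl rfl, .inl (.inr rfl)⟩

end

theorem subgraph_after_two_edge_deletion_general (G : SimpleGraph V)
    (htf : G.CliqueFree 3)
    (e₁ e₂ : Sym2 {x : Option (Fin 2 × V) // x ≠ none})
    (he₁ : e₁ ∈ (MyDelU G).edgeSet) (he₂ : e₂ ∈ (MyDelU G).edgeSet) :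
    ∃ f : G →g (MyDelU G).deleteEdges {e₁, e₂}, Function.Injective f := by
  obtain ⟨a, b, hab, rfl | rfl⟩ := exists_adj_of_mem_edgeSet_myDelU he₁ <;>
    obtain ⟨c, d, hcd, rfl | rfl⟩ := exists_adj_of_mem_edgeSet_myDelU he₂
  · obtain ⟨S, hS, ha, h₂⟩ := exists_isIndepSet_mem_meets htf a hcd
    exact exists_injective_hom_deleteEdges_myDelU hS
      (fun e _ => map_raiseLevel_ne_lvl0_lvl0 (.inl ha) e)
      (fun e _ => map_raiseLevel_ne_lvl0_lvl0 h₂ e)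
  · obtain ⟨S, hS, h₁, h₂⟩ := exists_isIndepSet_meets_pair_avoids hab.ne c d
    exact exists_injective_hom_deleteEdges_myDelU hS
      (fun e _ => map_raiseLevel_ne_lvl0_lvl0 h₁ e)
      (fun e _ => map_raiseLevel_ne_lvl0_lvl1 h₂ e)
  · obtain ⟨S, hS, h₂, h₁⟩ := exists_isIndepSet_meets_pair_avoids hcd.ne a b
    exact exists_injective_hom_deleteEdges_myDelU hS
      (fun e _ => map_raiseLevel_ne_lvl0_lvl1 h₁ e)
      (fun e _ => map_raiseLevel_ne_lvl0_lvl0 h₂ e)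
  · exact exists_injective_hom_deleteEdges_myDelU (S := ∅) (Set.pairwise_empty _)
      (fun e _ => map_raiseLevel_ne_lvl0_lvl1 (.inr (Set.notMem_empty b)) e)
      (fun e _ => map_raiseLevel_ne_lvl0_lvl1 (.inr (Set.notMem_empty d)) e)

theorem subgraph_after_two_edge_deletion (G : SimpleGraph V)
    (htf : G.CliqueFree 3) (h2 : 2 ≤ G.edgeSet.ncard)
    (e₁ e₂ : Sym2 {x : Option (Fin 2 × V) // x ≠ none})
    (he₁ : e₁ ∈ (MyDelU G).edgeSet) (he₂ : e₂ ∈ (MyDelU G).edgeSet)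
    (hne : e₁ ≠ e₂) :
    ∃ f : G →g (MyDelU G).deleteEdges {e₁, e₂}, Function.Injective f :=
  subgraph_after_two_edge_deletion_general G htf e₁ e₂ he₁ he₂
end
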